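/- For θ ∈ ℝ^{p×n}, ω ∈ ℝ^{n×q}, λ¹ with positive entries and λ² ∈ ℝ^n: (λ¹ ▽ θ) × r(λ² ▷ ω) = θ × r((λ¹·λ²) ▷ ω), where r is ReLU applied entrywise. -/
import Mathlib


open Matrix

noncomputable def relu (x : ℝ) : ℝ := max x 0

/-- Line-wise product: `(lineWise l θ) i j = l j * θ i j`. -/
def lineWise {p n : ℕ} (l : Fin n → ℝ) (θ : Matrix (Fin p) (Fin n) ℝ) :
    Matrix (Fin p) (Fin n) ℝ := fun i j => l j * θ i j

/-- Column-wise product: `(colWise μ ω) i j = μ i * ω i j`. -/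
def colWise {n q : ℕ} (μ : Fin n → ℝ) (ω : Matrix (Fin n) (Fin q) ℝ) :
    Matrix (Fin n) (Fin q) ℝ := fun i j => μ i * ω i j

/-- Entrywise ReLU on matrices. -/
noncomputable def reluMat {n q : ℕ} (ω : Matrix (Fin n) (Fin q) ℝ) :
    Matrix (Fin n) (Fin q) ℝ := fun i j => relu (ω i j)

theorem lineWise_mul_relu_colWise {p n q : ℕ} (θ : Matrix (Fin p) (Fin n) ℝ)
    (ω : Matrix (Fin n) (Fin q) ℝ) (l₁ l₂ : Fin n → ℝ) (hl₁ : ∀ k, 0 < l₁ k) :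
    lineWise l₁ θ * reluMat (colWise l₂ ω) =
      θ * reluMat (colWise (fun k => l₁ k * l₂ k) ω) := by
  ext i j
  simp only [Matrix.mul_apply, lineWise, reluMat, colWise, relu]
  refine Finset.sum_congr rfl fun k _ => ?_
  have h : l₁ k * max (l₂ k * ω k j) 0 = max (l₁ k * l₂ k * ω k j) 0 := by
    rw [mul_max_of_nonneg _ _ (hl₁ k).le, mul_zero, mul_assoc]
  rw [mul_comm (l₁ k) (θ i k), mul_assoc, h]
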